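/- arXiv:2304.09419 — 3 statements merged into one kernel-verified Lean document; each statement's English description precedes it below -/
import Mathlib

section
/- Suppose every individual preference R^i is a weak order. Then for sufficiently large α ∈ [1/2, 1) (specifically α ≥ f(|I|−1, 1)), the supermajority relation R_α is P-acyclic. -/
def Pasym {A : Type*} (R : A → A → Prop) : A → A → Prop :=
  fun a b => R a b ∧ ¬ R b a

def PAcyclic {A : Type*} (R : A → A → Prop) : Prop :=
  ∀ a b, Relation.TransGen (Pasym R) a b → ¬ Pasym R b a

def SuzumuraConsistent {A : Type*} (R : A → A → Prop) : Prop :=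
  ∀ a b, Relation.TransGen R a b → ¬ Pasym R b a

def Scl {A : Type*} (R : A → A → Prop) : A → A → Prop :=
  fun a b => R a b ∨ (Relation.TransGen R a b ∧ R b a)

def IsLinearRel {A : Type*} (L : A → A → Prop) : Prop :=
  (∀ a b, L a b → ¬ L b a) ∧
  (∀ a b c, L a b → L b c → L a c) ∧
  (∀ a b c, ¬ L a b → ¬ L b c → ¬ L a c) ∧
  (∀ a b, a ≠ b → L a b ∨ L b a)

def Respects {A : Type*} (R L : A → A → Prop) : Prop :=
  IsLinearRel L ∧ ∀ a b, Pasym R a b → L a b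

def IsWeakOrder {A : Type*} (R : A → A → Prop) : Prop :=
  (∀ a b, R a b → ¬ R b a) ∧
  (∀ a b c, R a b → R b c → R a c) ∧
  (∀ a b c, ¬ R a b → ¬ R b c → ¬ R a c)

noncomputable def Ncnt {A ι : Type*} (Ri : ι → A → A → Prop) (a b : A) : ℕ :=
  Nat.card {i : ι // Pasym (Ri i) a b}

noncomputable def PhiFn {A ι : Type*} (Ri : ι → A → A → Prop) (f : ℕ → ℕ → ℝ) (a b : A) : ℝ :=
  f (Ncnt Ri a b) (Ncnt Ri b a)

def Rmaj {A ι : Type*} (Ri : ι → A → A → Prop) (f : ℕ → ℕ → ℝ) (α : ℝ) : A → A → Prop :=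
  fun a b => PhiFn Ri f a b > α


lemma ncnt_add_le {A ι : Type*} [Fintype ι] (Ri : ι → A → A → Prop) (a b : A) :
    Ncnt Ri a b + Ncnt Ri b a ≤ Fintype.card ι := by
  classical
  have h1 : Ncnt Ri a b = (Finset.univ.filter (fun i => Pasym (Ri i) a b)).card := by
    simp [Ncnt, Nat.card_eq_fintype_card, Fintype.card_subtype]
  have h2 : Ncnt Ri b a = (Finset.univ.filter (fun i => Pasym (Ri i) b a)).card := by
    simp [Ncnt, Nat.card_eq_fintype_card, Fintype.card_subtype]
  rw [h1, h2, ← Finset.card_union_of_disjoint]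
  · exact le_trans (Finset.card_le_card (Finset.subset_univ _)) (le_of_eq Finset.card_univ)
  · rw [Finset.disjoint_filter]
    rintro i _ ⟨hab, hnba⟩ ⟨hba, _⟩
    exact hnba hba

lemma f_mono_left' (f : ℕ → ℕ → ℝ) (c : ℕ)
    (hf1 : ∀ n m : ℕ, n + m ≤ c → f (n+1) m > f n m) :
    ∀ n₁ n₂ m : ℕ, n₁ ≤ n₂ → n₂ + m ≤ c → f n₁ m ≤ f n₂ m := by
  intro n₁ n₂ m h
  induction n₂, h using Nat.le_induction with
  | base => intro _; exact le_rfl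
  | succ n hn ih =>
    intro hle
    exact le_trans (ih (by omega)) (le_of_lt (hf1 n m (by omega)))

lemma f_anti_right' (f : ℕ → ℕ → ℝ) (c : ℕ)
    (hf2 : ∀ n m : ℕ, n + m ≤ c → f n (m+1) < f n m) :
    ∀ n m₁ m₂ : ℕ, m₁ ≤ m₂ → n + m₂ ≤ c → f n m₂ ≤ f n m₁ := by
  intro n m₁ m₂ h
  induction m₂, h using Nat.le_induction with
  | base => intro _; exact le_rfl
  | succ m hm ih =>
    intro hle
    exact le_trans (le_of_lt (hf2 n m (by omega))) (ih (by omega))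

theorem stmt9 {A ι : Type*} [Fintype A] [Fintype ι] (Ri : ι → A → A → Prop)
    (f : ℕ → ℕ → ℝ)
    (hf0 : ∀ n m : ℕ, f n m ∈ Set.Icc (0:ℝ) 1)
    (hf1 : ∀ n m : ℕ, n + m ≤ Fintype.card ι → f (n+1) m > f n m)
    (hf2 : ∀ n m : ℕ, n + m ≤ Fintype.card ι → f n (m+1) < f n m)
    (hf3 : ∀ n : ℕ, n + n ≤ Fintype.card ι → f n n = 1/2)
    (hw : ∀ i : ι, IsWeakOrder (Ri i)) :
    ∀ α : ℝ, f (Fintype.card ι - 1) 1 ≤ α → α < 1 →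
      PAcyclic (Rmaj Ri f α) := by
  intro α hα hα1
  set c := Fintype.card ι with hc
  -- The Pareto relation
  set P : A → A → Prop := fun a b => (∀ i, ¬ Ri i b a) ∧ (∃ i, Ri i a b) with hP
  have key : ∀ a b, Pasym (Rmaj Ri f α) a b → P a b := by
    rintro a b ⟨hab, hba⟩
    have hsum := ncnt_add_le Ri a b
    have hfab : f (Ncnt Ri a b) (Ncnt Ri b a) > α := hab
    have hfba : ¬ (f (Ncnt Ri b a) (Ncnt Ri a b) > α) := hba
    set N := Ncnt Ri a b with hN
    set M := Ncnt Ri b a with hM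
    have hMN : N ≠ M := by
      intro h
      rw [h] at hfab hfba
      exact hfba hfab
    have hM0 : M = 0 := by
      by_contra hM0
      have hM1 : 1 ≤ M := Nat.one_le_iff_ne_zero.mpr hM0
      have hc1 : 1 ≤ c := by omega
      have h1 : f N M ≤ f (c - M) M := f_mono_left' f c hf1 N (c - M) M (by omega) (by omega)
      have h2 : f (c - M) M ≤ f (c - M) 1 := f_anti_right' f c hf2 (c - M) 1 M hM1 (by omega)
      have h3 : f (c - M) 1 ≤ f (c - 1) 1 := f_mono_left' f c hf1 (c - M) (c - 1) 1 (by omega) (by omega)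
      linarith
    have hN1 : N ≠ 0 := by omega
    constructor
    · intro i hi
      have hnp : Pasym (Ri i) b a := ⟨hi, (hw i).1 b a hi⟩
      have : Nonempty {j : ι // Pasym (Ri j) b a} := ⟨⟨i, hnp⟩⟩
      have hpos : 0 < Nat.card {j : ι // Pasym (Ri j) b a} := Nat.card_pos
      have : M = Nat.card {j : ι // Pasym (Ri j) b a} := rfl
      omega
    · have hne : Nonempty {j : ι // Pasym (Ri j) a b} := by
        by_contra hemp
        have : IsEmpty {j : ι // Pasym (Ri j) a b} := not_nonempty_iff.mp hemp
        have : N = 0 := Nat.card_of_isEmpty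
        exact hN1 this
      obtain ⟨⟨i, hi⟩⟩ := hne
      exact ⟨i, hi.1⟩
  have htrans : Transitive P := by
    rintro a b d ⟨h1, i, hi⟩ ⟨h2, j, hj⟩
    constructor
    · intro k hk
      exact (hw k).2.2 d b a (h2 k) (h1 k) hk
    · refine ⟨i, ?_⟩
      by_contra hnac
      exact ((hw i).2.2 a d b hnac (h2 i)) hi
  intro a b hTG hba
  have hPab : P a b := by
    have := Relation.TransGen.mono key a b hTG
    rwa [@Relation.transGen_eq_self _ P ⟨fun _ _ _ h1 h2 => htrans h1 h2⟩] at this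
  have hPba : P b a := key b a hba
  obtain ⟨_, i, hi⟩ := hPba
  exact hPab.1 i hi
end

section
/- The union ⋃_{α∈[1/2,1)} P(S(R_α)) of the asymmetric parts of the Suzumura-consistent closures of all supermajority relations is P-acyclic, and consequently the S-order set 𝒮 is nonempty. -/
lemma pasym_scl {A : Type*} {R : A → A → Prop} {a b : A} (h : Pasym (Scl R) a b) :
    R a b ∧ ¬ Scl R b a := by
  obtain ⟨h1, h2⟩ := h
  refine ⟨?_, h2⟩
  rcases h1 with h | ⟨_, hba⟩
  · exact h
  · exact absurd (Or.inl hba) h2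

lemma rmaj_mono {A ι : Type*} (Ri : ι → A → A → Prop) (f : ℕ → ℕ → ℝ) {α β : ℝ}
    (h : α ≤ β) : ∀ a b, Rmaj Ri f β a b → Rmaj Ri f α a b :=
  fun _ _ hb => lt_of_le_of_lt h hb

lemma cycle_aux {A ι : Type*} (Ri : ι → A → A → Prop) (f : ℕ → ℕ → ℝ) {b a : A}
    (h : Relation.TransGen
      (fun a b : A => ∃ α : ℝ, 1/2 ≤ α ∧ α < 1 ∧ Pasym (Scl (Rmaj Ri f α)) a b) b a) :
    ∃ α : ℝ, 1/2 ≤ α ∧ Relation.TransGen (Rmaj Ri f α) b a ∧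
      ∃ c d, ¬ Scl (Rmaj Ri f α) d c ∧ Rmaj Ri f α c d ∧
        Relation.ReflTransGen (Rmaj Ri f α) b c ∧
        Relation.ReflTransGen (Rmaj Ri f α) d a := by
  induction h with
  | single h' =>
      obtain ⟨α, hα, _, hp⟩ := h'
      obtain ⟨hR, hS⟩ := pasym_scl hp
      exact ⟨α, hα, Relation.TransGen.single hR, b, _, hS, hR,
        Relation.ReflTransGen.refl, Relation.ReflTransGen.refl⟩
  | @tail m y h1 h2 ih =>
      obtain ⟨β, hβ, _, hp⟩ := h2
      obtain ⟨hR2, hS2⟩ := pasym_scl hp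
      obtain ⟨α₁, hα₁, htg, c, d, hSc, hRc, hbc, hdm⟩ := ih
      rcases le_total α₁ β with hle | hle
      · exact ⟨α₁, hα₁, htg.tail (rmaj_mono Ri f hle _ _ hR2), c, d, hSc, hRc, hbc,
          hdm.tail (rmaj_mono Ri f hle _ _ hR2)⟩
      · refine ⟨β, hβ, (Relation.TransGen.mono (rmaj_mono Ri f hle) _ _ htg).tail hR2, m, y, hS2, hR2,
          (Relation.TransGen.mono (rmaj_mono Ri f hle) _ _ htg).to_reflTransGen, Relation.ReflTransGen.refl⟩

lemma no_cycle {A ι : Type*} (Ri : ι → A → A → Prop) (f : ℕ → ℕ → ℝ) {a : A}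
    (h : Relation.TransGen
      (fun a b : A => ∃ α : ℝ, 1/2 ≤ α ∧ α < 1 ∧ Pasym (Scl (Rmaj Ri f α)) a b) a a) :
    False := by
  obtain ⟨α, hα, _, c, d, hSc, hRc, hbc, hda⟩ := cycle_aux Ri f h
  have hdc : Relation.ReflTransGen (Rmaj Ri f α) d c := hda.trans hbc
  rcases (Relation.reflTransGen_iff_eq_or_transGen.mp hdc) with rfl | htdc
  · exact hSc (Or.inl hRc)
  · exact hSc (Or.inr ⟨htdc, hRc⟩)

theorem stmt14 {A ι : Type*} [Fintype A] [Fintype ι] (Ri : ι → A → A → Prop)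
    (f : ℕ → ℕ → ℝ)
    (hf0 : ∀ n m : ℕ, f n m ∈ Set.Icc (0:ℝ) 1)
    (hf1 : ∀ n m : ℕ, n + m ≤ Fintype.card ι → f (n+1) m > f n m)
    (hf2 : ∀ n m : ℕ, n + m ≤ Fintype.card ι → f n (m+1) < f n m)
    (hf3 : ∀ n : ℕ, n + n ≤ Fintype.card ι → f n n = 1/2) :
    PAcyclic (fun a b : A => ∃ α : ℝ, 1/2 ≤ α ∧ α < 1 ∧ Pasym (Scl (Rmaj Ri f α)) a b) ∧
    (∃ L : A → A → Prop, ∀ α : ℝ, 1/2 ≤ α → α < 1 → Respects (Scl (Rmaj Ri f α)) L) := by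
  set U : A → A → Prop :=
    fun a b : A => ∃ α : ℝ, 1/2 ≤ α ∧ α < 1 ∧ Pasym (Scl (Rmaj Ri f α)) a b with hU
  have hirr : ∀ a : A, ¬ Relation.TransGen U a a := fun a h => no_cycle Ri f h
  -- build a partial order containing TransGen U
  let r : A → A → Prop := fun a b => Relation.TransGen U a b ∨ a = b
  haveI : IsPartialOrder A r := by
    refine { refl := fun a => Or.inr rfl, trans := ?_, antisymm := ?_ }
    · rintro a b c (hab | rfl) (hbc | rfl)
      · exact Or.inl (hab.trans hbc)
      · exact Or.inl hab
      · exact Or.inl hbc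
      · exact Or.inr rfl
    · rintro a b (hab | rfl) (hba | hba)
      · exact absurd (hab.trans hba) (hirr a)
      · exact hba.symm
      · rfl
      · rfl
  obtain ⟨s, hs, hrs⟩ := extend_partialOrder r
  let L : A → A → Prop := fun a b => ¬ s b a
  have htot : ∀ a b : A, s a b ∨ s b a := hs.total
  have hstrans : ∀ a b c : A, s a b → s b c → s a c := fun a b c => hs.trans a b c
  have hanti : ∀ a b : A, s a b → s b a → a = b := fun a b => hs.antisymm a b
  have hLlin : IsLinearRel L := by
    refine ⟨?_, ?_, ?_, ?_⟩
    · intro a b hab hba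
      exact (htot a b).elim hba hab
    · intro a b c hab hbc hca
      have hsab : s a b := (htot a b).resolve_right hab
      exact hbc (hstrans c a b hca hsab)
    · intro a b c hab hbc hac
      have hba : s b a := not_not.mp hab
      have hcb : s c b := not_not.mp hbc
      exact hac (hstrans c b a hcb hba)
    · intro a b hne
      by_contra hcon
      push_neg at hcon
      exact hne (hanti a b (not_not.mp hcon.2) (not_not.mp hcon.1))
  have hUL : ∀ a b : A, U a b → L a b := by
    intro a b hab hsba
    have hsab : s a b := hrs a b (Or.inl (Relation.TransGen.single hab))
    have : a = b := hanti a b hsab hsba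
    subst this
    exact hirr a (Relation.TransGen.single hab)
  constructor
  · intro a b hab hba
    have hUab : Relation.TransGen U a b := Relation.TransGen.mono (fun x y h => h.1) _ _ hab
    exact hirr a (hUab.tail hba.1)
  · refine ⟨L, fun α hα1 hα2 => ⟨hLlin, fun a b hab => hUL a b ⟨α, hα1, hα2, hab⟩⟩⟩
end

section
/- A pair (a,b) belongs to ⋃_{α∈[1/2,1)} P(S(R_α)) if and only if Φ[a,b] > max{1/2, B[b,a]}, where B[b,a] is the strength of the strongest path from b to a in the simple majority relation. -/
def IsPathFrom {A : Type*} (R : A → A → Prop) (a b : A) (l : List A) : Prop :=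
  2 ≤ l.length ∧ l.Nodup ∧ l.head? = some a ∧ l.getLast? = some b ∧ l.Chain' R

def strengthOf {A : Type*} (Φ : A → A → ℝ) (l : List A) : ℝ :=
  ((l.zip l.tail).map fun p => Φ p.1 p.2).foldr min 1

noncomputable def Bval {A : Type*} (R : A → A → Prop) (Φ : A → A → ℝ) (a b : A) : ℝ :=
  sSup {s : ℝ | ∃ l : List A, IsPathFrom R a b l ∧ strengthOf Φ l = s}

section Aux
open List Relation

lemma foldr_min_le' {L : List ℝ} {x : ℝ} (hx : x ∈ L) : L.foldr min 1 ≤ x := by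
  induction L with
  | nil => cases hx
  | cons a t ih =>
    rcases List.mem_cons.mp hx with rfl | h
    · exact min_le_left _ _
    · exact le_trans (min_le_right _ _) (ih h)

lemma lt_foldr_min' {α : ℝ} (hα : α < 1) : ∀ {L : List ℝ}, (∀ x ∈ L, α < x) → α < L.foldr min 1 := by
  intro L h
  induction L with
  | nil => exact hα
  | cons a t ih =>
    exact lt_min (h a List.mem_cons_self) (ih fun x hx => h x (List.mem_cons_of_mem _ hx))

lemma chain'_iff_zip' {A : Type*} {S : A → A → Prop} :
    ∀ l : List A, l.Chain' S ↔ ∀ p ∈ l.zip l.tail, S p.1 p.2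
  | [] => by simp [List.Chain']
  | [x] => by simp [List.Chain']
  | x :: y :: t => by
    rw [show (x :: y :: t).Chain' S = (x :: y :: t).IsChain S from rfl, List.isChain_cons_cons]
    have ih := chain'_iff_zip' (S := S) (y :: t)
    constructor
    · rintro ⟨h1, h2⟩ p hp
      simp only [List.tail_cons, List.zip_cons_cons, List.mem_cons] at hp
      rcases hp with rfl | hp
      · exact h1
      · exact ih.mp h2 p hp
    · intro h
      refine ⟨h (x, y) (by simp), ih.mpr fun p hp => h p ?_⟩
      simp only [List.tail_cons, List.zip_cons_cons, List.mem_cons]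
      exact Or.inr hp

lemma dup_split' {A : Type*} {c : A} {l : List A} (h : List.Duplicate c l) :
    ∃ l1 l2 l3 : List A, l = l1 ++ c :: (l2 ++ c :: l3) := by
  induction h with
  | cons_mem hm =>
    obtain ⟨s, t, rfl⟩ := List.append_of_mem hm
    exact ⟨[], s, t, rfl⟩
  | @cons_duplicate y l' h ih =>
    obtain ⟨l1, l2, l3, rfl⟩ := ih
    exact ⟨y :: l1, l2, l3, rfl⟩

lemma chain'_shortcut' {A : Type*} {R : A → A → Prop} {c : A} {l1 l2 l3 : List A}
    (h : List.Chain' R (l1 ++ c :: (l2 ++ c :: l3))) : List.Chain' R (l1 ++ c :: l3) := by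
  change List.IsChain R _ at h ⊢
  rw [List.isChain_split] at h ⊢
  refine ⟨h.1, ?_⟩
  have h2 := h.2
  rw [show c :: (l2 ++ c :: l3) = (c :: l2) ++ c :: l3 from rfl, List.isChain_split] at h2
  exact h2.2

lemma exists_path' {A : Type*} {R : A → A → Prop} {x y : A} (hxy : x ≠ y) :
    ∀ (n : ℕ) (l : List A), l.length ≤ n → l.Chain' R → l.head? = some x →
      l.getLast? = some y → ∃ m, IsPathFrom R x y m := by
  intro n
  induction n with
  | zero =>
    intro l hlen _ hh _
    interval_cases h : l.length
    · rw [List.length_eq_zero_iff] at h; subst h; simp at hh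
  | succ n ih =>
    intro l hlen hch hh hg
    by_cases hnd : l.Nodup
    · refine ⟨l, ?_, hnd, hh, hg, hch⟩
      match l, hh, hg with
      | [a], hh, hg =>
        simp only [List.head?_cons, Option.some.injEq] at hh
        simp only [List.getLast?_singleton, Option.some.injEq] at hg
        exact absurd (hh.symm.trans hg) hxy
      | a :: b :: t, _, _ => simp
    · obtain ⟨c, hc⟩ := List.exists_duplicate_iff_not_nodup.mpr hnd
      obtain ⟨l1, l2, l3, rfl⟩ := dup_split' hc
      refine ih (l1 ++ c :: l3) ?_ (chain'_shortcut' hch) ?_ ?_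
      · simp only [List.length_append, List.length_cons] at hlen ⊢
        omega
      · cases l1 with
        | nil => simpa using hh
        | cons a t => simpa using hh
      · rw [List.getLast?_append_cons] at hg ⊢
        rw [show c :: (l2 ++ c :: l3) = (c :: l2) ++ c :: l3 from rfl,
          List.getLast?_append_cons] at hg
        exact hg

lemma transGen_chain' {A : Type*} {R : A → A → Prop} {x y : A} (h : Relation.TransGen R x y) :
    ∃ l : List A, l ≠ [] ∧ (x :: l).Chain' R ∧ (x :: l).getLast? = some y := by
  induction h with
  | @single b h => exact ⟨[b], by simp, by simp [List.Chain', h], by simp⟩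
  | @tail b c htg hbc ih =>
    obtain ⟨l, hne, hch, hla⟩ := ih
    refine ⟨l ++ [c], by simp, ?_, ?_⟩
    · rw [show (x :: (l ++ [c])).Chain' R = ((x :: l) ++ [c]).IsChain R from rfl, List.isChain_append]
      refine ⟨hch, List.isChain_singleton _, ?_⟩
      intro u hu v hv
      simp only [List.head?_cons, Option.mem_def, Option.some.injEq] at hv
      rw [Option.mem_def, hla, Option.some.injEq] at hu
      subst hu; subst hv; exact hbc
    · rw [show x :: (l ++ [c]) = (x :: l) ++ [c] from rfl]
      exact List.getLast?_concat

lemma chain_transGen' {A : Type*} {R : A → A → Prop} :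
    ∀ (t : List A) (x y : A), t ≠ [] → List.Chain R x t → t.getLast? = some y →
      Relation.TransGen R x y := by
  intro t
  induction t with
  | nil => simp
  | cons c t' ih =>
    intro x y _ hch hl
    rw [show List.Chain R x (c :: t') = List.IsChain R (x :: c :: t') from rfl, List.isChain_cons_cons] at hch
    cases t' with
    | nil =>
      simp only [List.getLast?_singleton, Option.some.injEq] at hl
      subst hl; exact Relation.TransGen.single hch.1
    | cons d t'' =>
      rw [List.getLast?_cons_cons] at hl
      exact (ih c y (by simp) hch.2 hl).head hch.1

lemma strength_set_finite {A : Type*} [Fintype A] (R : A → A → Prop) (Φ : A → A → ℝ) (a b : A) :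
    {s : ℝ | ∃ l : List A, IsPathFrom R a b l ∧ strengthOf Φ l = s}.Finite := by
  have hsub : {s : ℝ | ∃ l : List A, IsPathFrom R a b l ∧ strengthOf Φ l = s}
      ⊆ (strengthOf Φ) '' {l : List A | l.length ≤ Fintype.card A} := by
    rintro s ⟨l, hl, rfl⟩
    exact ⟨l, hl.2.1.length_le_card, rfl⟩
  exact ((List.finite_length_le (α := A) (Fintype.card A)).image _).subset hsub

end Aux

theorem stmt19 {A ι : Type*} [Fintype A] [Fintype ι] (Ri : ι → A → A → Prop)
    (f : ℕ → ℕ → ℝ)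
    (hf0 : ∀ n m : ℕ, f n m ∈ Set.Icc (0:ℝ) 1)
    (hf1 : ∀ n m : ℕ, n + m ≤ Fintype.card ι → f (n+1) m > f n m)
    (hf2 : ∀ n m : ℕ, n + m ≤ Fintype.card ι → f n (m+1) < f n m)
    (hf3 : ∀ n : ℕ, n + n ≤ Fintype.card ι → f n n = 1/2) :
    ∀ a b : A,
      (∃ α : ℝ, 1/2 ≤ α ∧ α < 1 ∧ Pasym (Scl (Rmaj Ri f α)) a b) ↔
        PhiFn Ri f a b > max (1/2) (Bval (Rmaj Ri f (1/2)) (PhiFn Ri f) b a) := by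
  have hphi_le_one : ∀ x y : A, PhiFn Ri f x y ≤ 1 := fun x y => (hf0 _ _).2
  have hphi_refl : ∀ x : A, PhiFn Ri f x x = 1/2 := by
    intro x
    have he : IsEmpty {i : ι // Pasym (Ri i) x x} := ⟨fun i => i.2.2 i.2.1⟩
    have hz : Ncnt Ri x x = 0 := by rw [Ncnt]; exact Nat.card_of_isEmpty
    rw [PhiFn, hz]
    exact hf3 0 (Nat.zero_le _)
  intro a b
  constructor
  · rintro ⟨α, hahalf, hα1, hScl, hnScl⟩
    have hRab : Rmaj Ri f α a b := by
      rcases hScl with h | ⟨_, h⟩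
      · exact h
      · exact absurd (Or.inl h) hnScl
    have h1 : (1:ℝ)/2 < PhiFn Ri f a b := lt_of_le_of_lt hahalf hRab
    rw [gt_iff_lt, max_lt_iff]
    refine ⟨h1, ?_⟩
    by_contra hB
    push_neg at hB
    have hfin := strength_set_finite (Rmaj Ri f (1/2)) (PhiFn Ri f) b a
    have hne : {s : ℝ | ∃ l : List A, IsPathFrom (Rmaj Ri f (1/2)) b a l ∧
        strengthOf (PhiFn Ri f) l = s}.Nonempty := by
      by_contra hemp
      rw [Set.not_nonempty_iff_eq_empty] at hemp
      rw [Bval, hemp, Real.sSup_empty] at hB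
      linarith
    obtain ⟨l, hl, hs⟩ := hne.csSup_mem hfin
    have hstr : α < strengthOf (PhiFn Ri f) l := by
      rw [hs]
      exact lt_of_lt_of_le hRab hB
    obtain ⟨hlen, hnd, hh, hg, hch⟩ := hl
    have hchα : l.Chain' (Rmaj Ri f α) := by
      rw [chain'_iff_zip']
      intro p hp
      have hle : strengthOf (PhiFn Ri f) l ≤ PhiFn Ri f p.1 p.2 :=
        foldr_min_le' (List.mem_map_of_mem hp)
      exact lt_of_lt_of_le hstr hle
    cases l with
    | nil => simp at hh
    | cons b' t =>
      simp only [List.head?_cons, Option.some.injEq] at hh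
      rw [hh] at hchα
      have htne : t ≠ [] := by
        cases t with
        | nil => simp at hlen
        | cons d t' => simp
      have hgt : t.getLast? = some a := by
        cases t with
        | nil => simp at hlen
        | cons d t' => rwa [List.getLast?_cons_cons] at hg
      have htg : Relation.TransGen (Rmaj Ri f α) b a :=
        chain_transGen' t b a htne hchα hgt
      exact hnScl (Or.inr ⟨htg, hRab⟩)
  · intro h
    rw [gt_iff_lt, max_lt_iff] at h
    obtain ⟨h1, h2⟩ := h
    set B := Bval (Rmaj Ri f (1/2)) (PhiFn Ri f) b a with hBdef
    set α := max (1/2 : ℝ) B with hαdef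
    have hRab : Rmaj Ri f α a b := max_lt h1 h2
    have hα1 : α < 1 := lt_of_lt_of_le hRab (hphi_le_one a b)
    have hne : b ≠ a := by
      intro hba
      subst hba
      rw [hphi_refl b] at h1
      linarith
    have key : ¬ Relation.TransGen (Rmaj Ri f α) b a := by
      intro htg
      obtain ⟨l0, hne0, hch0, hla0⟩ := transGen_chain' htg
      obtain ⟨m, hlen, hnd, hh, hg, hch⟩ :=
        exists_path' hne (l0.length + 1) (b :: l0) (by simp) hch0 (by simp) hla0
      have hchhalf : m.Chain' (Rmaj Ri f (1/2)) := by
        refine hch.imp fun x y hxy => lt_of_le_of_lt (le_max_left _ _) hxy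
      have hstr : α < strengthOf (PhiFn Ri f) m := by
        rw [strengthOf]
        refine lt_foldr_min' hα1 ?_
        intro s hs
        obtain ⟨p, hp, rfl⟩ := List.mem_map.mp hs
        exact (chain'_iff_zip' m).mp hch p hp
      have hle : strengthOf (PhiFn Ri f) m ≤ B := by
        apply le_csSup (strength_set_finite (Rmaj Ri f (1/2)) (PhiFn Ri f) b a).bddAbove
        exact ⟨m, ⟨hlen, hnd, hh, hg, hchhalf⟩, rfl⟩
      have : α < B := lt_of_lt_of_le hstr hle
      have : B ≤ α := le_max_right _ _
      linarith
    refine ⟨α, le_max_left _ _, hα1, Or.inl hRab, ?_⟩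
    rintro (hba | ⟨htg, _⟩)
    · exact key (Relation.TransGen.single hba)
    · exact key htg
end
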